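/- arXiv:1208.4833 — 6 statements merged into one kernel-verified Lean document; each statement's English description precedes it below -/
import Mathlib

section
/- Let K be an algebraically closed field of characteristic 0, r, s ∈ K* with f ∈ K[h] not conformal (i.e., there is no g ∈ K[h] with f(h) = s·g(h) − g(r·h)). Then for every k > 0, the polynomial P_k(h) = Σ_{i=0}^{k-1} sⁱ f(r^{-i}h) is nonzero. -/
/-!
Coefficientwise, `f = s·g − g(r·h)` reads `f_n = (s − rⁿ) g_n`, solvable exactly when `f_n = 0`
for every resonant degree `n` (`rⁿ = s`). So a non-conformal `f` has a resonant coefficient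
`f_n ≠ 0`, and at such `n` every summand of `P_k` contributes `sⁱ f_n r⁻ⁱⁿ = f_n`, giving
`(P_k)_n = k f_n ≠ 0` in characteristic zero.
-/

open Polynomial

theorem Polynomial.exists_coeff_eq_coeff_mul {R : Type*} [Semiring R] (p : R[X]) (c : ℕ → R) :
    ∃ q : R[X], ∀ n, q.coeff n = p.coeff n * c n :=
  ⟨∑ n ∈ p.support, monomial n (p.coeff n * c n), fun n => by
    simp +contextual [coeff_monomial]⟩

theorem Polynomial.coeff_comp_C_mul_X {R : Type*} [CommSemiring R] (p : R[X]) (a : R) (n : ℕ) :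
    (p.comp (C a * X)).coeff n = p.coeff n * a ^ n := by
  induction p using Polynomial.induction_on' with
  | add p q hp hq => simp [add_comp, hp, hq, add_mul]
  | monomial k b =>
    rw [monomial_comp, mul_pow, ← C_pow, ← mul_assoc, ← C_mul, coeff_C_mul_X_pow, coeff_monomial]
    split_ifs <;> simp_all

theorem Polynomial.exists_eq_C_mul_sub_comp_of_coeff_eq_zero {K : Type*} [Field K] (r s : K)
    (f : K[X]) (h : ∀ n, r ^ n = s → f.coeff n = 0) :
    ∃ g : K[X], f = C s * g - g.comp (C r * X) := by
  obtain ⟨g, hg⟩ := f.exists_coeff_eq_coeff_mul fun n => (s - r ^ n)⁻¹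
  refine ⟨g, ext fun n => ?_⟩
  have hcoeff :
      (C s * g - g.comp (C r * X)).coeff n = f.coeff n * ((s - r ^ n)⁻¹ * (s - r ^ n)) := by
    rw [coeff_sub, coeff_C_mul, coeff_comp_C_mul_X, hg]
    ring
  rw [hcoeff]
  by_cases hn : r ^ n = s
  · simp [h n hn]
  · rw [inv_mul_cancel₀ (sub_ne_zero.mpr (Ne.symm hn)), mul_one]

theorem Polynomial.coeff_sum_C_pow_mul_comp_of_pow_eq {K : Type*} [Field K] {r s : K} (hs : s ≠ 0)
    (f : K[X]) {n : ℕ} (hn : r ^ n = s) (k : ℕ) :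
    (∑ i ∈ Finset.range k, C (s ^ i) * f.comp (C (r⁻¹ ^ i) * X)).coeff n = k * f.coeff n := by
  have hterm (i : ℕ) : s ^ i * (f.coeff n * (r⁻¹ ^ i) ^ n) = f.coeff n := by
    rw [← pow_mul, mul_comm i, pow_mul, inv_pow, hn, mul_left_comm, ← mul_pow,
      mul_inv_cancel₀ hs, one_pow, mul_one]
  simp only [finsetSum_coeff, coeff_C_mul, coeff_comp_C_mul_X, hterm, Finset.sum_const,
    Finset.card_range, nsmul_eq_mul]

theorem Pk_ne_zero_of_not_conformal_general {K : Type*} [Field K] [CharZero K]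
    (r s : K) (hs : s ≠ 0) (f : K[X])
    (hnc : ¬ ∃ g : K[X], f = C s * g - g.comp (C r * X)) :
    ∀ k : ℕ, 0 < k → ∑ i ∈ Finset.range k, C (s ^ i) * f.comp (C (r⁻¹ ^ i) * X) ≠ 0 := by
  obtain ⟨n, hn, hfn⟩ : ∃ n, r ^ n = s ∧ f.coeff n ≠ 0 := by
    by_contra! h
    exact hnc (exists_eq_C_mul_sub_comp_of_coeff_eq_zero r s f h)
  intro k hk hP
  have hcoeff := coeff_sum_C_pow_mul_comp_of_pow_eq hs f hn k
  rw [hP, coeff_zero, eq_comm] at hcoeff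
  exact mul_ne_zero (Nat.cast_ne_zero.mpr hk.ne') hfn hcoeff

/-- If `f` is not conformal (no `g` with `f(h) = s·g(h) − g(r·h)`), then
`P_k(h) = Σ_{i=0}^{k-1} sⁱ f(r^{-i}h)` is nonzero for every `k > 0`. -/
theorem Pk_ne_zero_of_not_conformal {K : Type*} [Field K] [IsAlgClosed K] [CharZero K]
    (r s : K) (hr : r ≠ 0) (hs : s ≠ 0) (f : K[X])
    (hnc : ¬ ∃ g : K[X], f = C s * g - g.comp (C r * X)) :
    ∀ k : ℕ, 0 < k → ∑ i ∈ Finset.range k, C (s ^ i) * f.comp (C (r⁻¹ ^ i) * X) ≠ 0 :=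
  Pk_ne_zero_of_not_conformal_general r s hs f hnc
end

section
/- Let K be an algebraically closed field of characteristic 0, r, s ∈ K*, and f ∈ K[h] not conformal for (r,s), i.e., there is no g with f(h) = s·g(h) − g(r·h). Write f = f_c + f_nc where f_c is conformal and s = rⁱ for all i ∈ supp(f_nc). Then with j = min supp(f_nc), one has s = r^j and f_nc = h^j · F where F is a nonzero polynomial; moreover if r is not a root of unity then F is a nonzero constant, and if r has multiplicative order l ≥ 1 then F is a polynomial in h^l. -/
/-!
The operator `g ↦ s·g(h) - g(r h)` acts on `hⁱ` as multiplication by `s - rⁱ`, so every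
polynomial supported on exponents with `s ≠ rⁱ` is conformal; hence `f_nc ≠ 0`. Every exponent
`j + k` of `f_nc = hʲ F` satisfies `r^(j+k) = s = r^j`, so `rᵏ = 1`: either `k = 0`, or `k` is a
multiple of the order of `r`.
-/

open Polynomial

namespace Polynomial

section CommSemiring

variable {R : Type*} [CommSemiring R]

theorem expand_contract_of_forall_mem_support_dvd {p : ℕ} (hp : p ≠ 0) {f : R[X]}
    (h : ∀ n ∈ f.support, p ∣ n) : expand R p (contract p f) = f := by
  ext n
  rw [coeff_expand hp.bot_lt, coeff_contract hp]
  split_ifs with hn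
  · rw [Nat.div_mul_cancel hn]
  · exact (notMem_support_iff.mp fun hmem => hn (h n hmem)).symm

variable {M : Type*} [Monoid M] {r : M} {F : R[X]}

theorem eq_C_of_forall_mem_support_pow_eq_one (hr : ∀ n : ℕ, 1 ≤ n → r ^ n ≠ 1)
    (hF : ∀ k ∈ F.support, r ^ k = 1) : F = C (F.coeff 0) := by
  refine eq_C_of_natDegree_eq_zero (by_contra fun hd => ?_)
  have hF0 : F ≠ 0 := by rintro rfl; exact hd natDegree_zero
  exact hr _ (Nat.one_le_iff_ne_zero.mpr hd) (hF _ (natDegree_mem_support_of_nonzero hF0))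

end CommSemiring

variable {K : Type*} [Field K]

def IsConformal (r s : K) (p : K[X]) : Prop :=
  ∃ g : K[X], p = C s * g - g.comp (C r * X)

theorem isConformal_of_forall_mem_support_ne {r s : K} {p : K[X]}
    (h : ∀ i ∈ p.support, s ≠ r ^ i) : IsConformal r s p := by
  refine ⟨∑ i ∈ p.support, monomial i (p.coeff i / (s - r ^ i)), ?_⟩
  ext n
  simp only [coeff_sub, coeff_C_mul, comp_C_mul_X_coeff, finsetSum_coeff, coeff_monomial,
    Finset.sum_ite_eq']
  by_cases hn : n ∈ p.support
  · have := sub_ne_zero.mpr (h n hn)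
    rw [if_pos hn]
    field_simp
  · rw [if_neg hn, notMem_support_iff.mp hn]
    ring

theorem pow_eq_one_of_forall_mem_support_X_pow_mul {r s : K} (hr : r ≠ 0) {j : ℕ} {F : K[X]}
    (hs : s = r ^ j) (h : ∀ i ∈ (X ^ j * F).support, s = r ^ i) :
    ∀ k ∈ F.support, r ^ k = 1 := by
  intro k hk
  have hjk : j + k ∈ (X ^ j * F).support := by
    rwa [mem_support_iff, add_comm, coeff_X_pow_mul, ← mem_support_iff]
  have := h _ hjk
  rw [hs, pow_add] at this
  exact (mul_eq_left₀ (pow_ne_zero j hr)).mp this.symm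

end Polynomial

theorem not_conformal_decomposition_general {K : Type*} [Field K]
    (r s : K) (hr : r ≠ 0) (f fc fnc : K[X])
    (hdec : f = fc + fnc)
    (hfc : ∀ i ∈ fc.support, s ≠ r ^ i)
    (hfnc : ∀ i ∈ fnc.support, s = r ^ i)
    (hnc : ¬ ∃ g : K[X], f = C s * g - g.comp (C r * X)) :
    fnc ≠ 0 ∧ ∃ j : ℕ, ∃ F : K[X],
      j = fnc.natTrailingDegree ∧ j ∈ f.support ∧ s = r ^ j ∧ fnc = X ^ j * F ∧ F ≠ 0 ∧
      ((∀ n : ℕ, 1 ≤ n → r ^ n ≠ 1) → ∃ c : K, F = C c) ∧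
      (∀ l : ℕ, 1 ≤ l → r ^ l = 1 → (∀ m : ℕ, 0 < m → m < l → r ^ m ≠ 1) →
        ∃ G : K[X], F = G.comp (X ^ l)) := by
  have hfnc0 : fnc ≠ 0 := by
    rintro rfl
    rw [hdec, add_zero] at hnc
    exact hnc (isConformal_of_forall_mem_support_ne hfc)
  set j := fnc.natTrailingDegree
  have hj : j ∈ fnc.support := natTrailingDegree_mem_support_of_nonzero hfnc0
  have hsj : s = r ^ j := hfnc j hj
  have hjf : j ∈ f.support := by
    have hfcj : fc.coeff j = 0 := notMem_support_iff.mp fun h => hfc j h hsj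
    rwa [hdec, mem_support_iff, coeff_add, hfcj, zero_add, ← mem_support_iff]
  obtain ⟨F, hF⟩ : X ^ j ∣ fnc :=
    X_pow_dvd_iff.mpr fun d hd => coeff_eq_zero_of_lt_natTrailingDegree hd
  have hF0 : F ≠ 0 := right_ne_zero_of_mul (hF ▸ hfnc0)
  have hpow : ∀ k ∈ F.support, r ^ k = 1 :=
    pow_eq_one_of_forall_mem_support_X_pow_mul hr hsj (hF ▸ hfnc)
  refine ⟨hfnc0, j, F, rfl, hjf, hsj, hF, hF0,
    fun hr' => ⟨_, eq_C_of_forall_mem_support_pow_eq_one hr' hpow⟩,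
    fun l hl hrl hmin => ⟨contract l F, ?_⟩⟩
  have hord : orderOf r = l := (orderOf_eq_iff hl).mpr ⟨hrl, fun m hml hm => hmin m hm hml⟩
  rw [← expand_eq_comp_X_pow, expand_contract_of_forall_mem_support_dvd (by omega)
    fun k hk => hord ▸ orderOf_dvd_of_pow_eq_one (hpow k hk)]

/-- Decomposition of a non-conformal polynomial: if `f = f_c + f_nc` with `f_c`
conformal (i.e. `s ≠ rⁱ` on its support) and `s = rⁱ` for all `i ∈ supp(f_nc)`,
then `f_nc ≠ 0` and, with `j = min supp(f_nc)`, one has `j ∈ supp(f)`, `s = r^j`,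
`f_nc = h^j · F` with `F ≠ 0`; moreover `F` is constant if `r` is not a root of
unity, and `F` is a polynomial in `h^l` if `r` has multiplicative order `l ≥ 1`. -/
theorem not_conformal_decomposition {K : Type*} [Field K] [IsAlgClosed K] [CharZero K]
    (r s : K) (hr : r ≠ 0) (hs : s ≠ 0) (f fc fnc : K[X])
    (hdec : f = fc + fnc)
    (hfc : ∀ i ∈ fc.support, s ≠ r ^ i)
    (hfnc : ∀ i ∈ fnc.support, s = r ^ i)
    (hnc : ¬ ∃ g : K[X], f = C s * g - g.comp (C r * X)) :
    fnc ≠ 0 ∧ ∃ j : ℕ, ∃ F : K[X],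
      j = fnc.natTrailingDegree ∧ j ∈ f.support ∧ s = r ^ j ∧ fnc = X ^ j * F ∧ F ≠ 0 ∧
      ((∀ n : ℕ, 1 ≤ n → r ^ n ≠ 1) → ∃ c : K, F = C c) ∧
      (∀ l : ℕ, 1 ≤ l → r ^ l = 1 → (∀ m : ℕ, 0 < m → m < l → r ^ m ≠ 1) →
        ∃ G : K[X], F = G.comp (X ^ l)) :=
  not_conformal_decomposition_general r s hr f fc fnc hdec hfc hfnc hnc
end

section
/- Let K be an algebraically closed field of characteristic 0, γ ∈ K nonzero, and s ∈ K* not a root of unity. If a polynomial p ∈ K[h] satisfies: for all λ ∈ K and all integers n ≥ 1, (sⁿ·p(λ) = p(λ − n·γ) implies p(λ) = 0), then p is a constant polynomial. Conversely, every constant polynomial satisfies this property. -/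
open Polynomial

/-- With `γ ≠ 0` and `s` not a root of unity, a polynomial `p` satisfies
"for all `λ ∈ K` and `n ≥ 1`, `sⁿ·p(λ) = p(λ − n·γ)` implies `p(λ) = 0`"
if and only if `p` is constant. -/
theorem property_H_iff_constant {K : Type*} [Field K] [IsAlgClosed K] [CharZero K]
    (γ : K) (hγ : γ ≠ 0) (s : K) (hs : s ≠ 0)
    (hsru : ∀ n : ℕ, 1 ≤ n → s ^ n ≠ 1) (p : K[X]) :
    (∀ (l : K) (n : ℕ), 1 ≤ n → s ^ n * p.eval l = p.eval (l - n * γ) → p.eval l = 0) ↔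
      ∃ c : K, p = C c := by
  constructor
  · intro H
    by_contra hne
    push_neg at hne
    have hp0 : p ≠ 0 := fun h => hne 0 (by simp [h])
    have hd : p.natDegree ≠ 0 := by
      intro h
      obtain ⟨c, hc⟩ := Polynomial.natDegree_eq_zero.mp h
      exact hne c hc.symm
    have hd1 : 1 ≤ p.natDegree := Nat.one_le_iff_ne_zero.mpr hd
    have key : ∀ n : ℕ, ∃ l : K, p.eval l = 0 ∧ p.eval (l - ((n : K) + 1) * γ) = 0 := by
      intro n
      set m : ℕ := n + 1 with hm
      have hm1 : 1 ≤ m := Nat.le_add_left 1 n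
      set c : K := (m : K) * γ with hc
      set q : K[X] := C (s ^ m) * p - p.comp (X - C c) with hq
      have hlin : (X - C c).natDegree = 1 := natDegree_X_sub_C _
      have hcomp_deg : (p.comp (X - C c)).natDegree = p.natDegree := by
        rw [natDegree_comp, hlin, mul_one]
      have hcoeff : q.coeff p.natDegree = (s ^ m - 1) * p.leadingCoeff := by
        rw [hq, coeff_sub, coeff_C_mul]
        have h1 : (p.comp (X - C c)).coeff p.natDegree
            = (p.comp (X - C c)).leadingCoeff := by
          rw [Polynomial.leadingCoeff, hcomp_deg]
        rw [h1, leadingCoeff_comp (by rw [hlin]; norm_num), leadingCoeff_X_sub_C,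
          one_pow, mul_one]
        rw [Polynomial.leadingCoeff]
        ring
      have hsm : s ^ m - 1 ≠ 0 := sub_ne_zero.mpr (hsru m hm1)
      have hcne : q.coeff p.natDegree ≠ 0 := by
        rw [hcoeff]
        exact mul_ne_zero hsm (leadingCoeff_ne_zero.mpr hp0)
      have hqdeg : p.natDegree ≤ q.natDegree := le_natDegree_of_ne_zero hcne
      have hq0 : q ≠ 0 := fun h => hcne (by simp [h])
      have hdegne : q.degree ≠ 0 := by
        intro h
        have : q.natDegree = 0 := natDegree_eq_zero_iff_degree_le_zero.mpr h.le
        omega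
      obtain ⟨l, hl⟩ := IsAlgClosed.exists_root q hdegne
      have hl' : s ^ m * p.eval l = p.eval (l - c) := by
        have := hl
        simp only [IsRoot, hq, eval_sub, eval_mul, eval_C, eval_comp, eval_X] at this
        exact sub_eq_zero.mp this
      have hpl : p.eval l = 0 := by
        apply H l m hm1
        rwa [hc] at hl'
      refine ⟨l, hpl, ?_⟩
      have : p.eval (l - c) = 0 := by rw [← hl', hpl, mul_zero]
      have hcast : ((m : K)) = (n : K) + 1 := by push_cast [hm]; ring
      rwa [hc, hcast] at this
    choose f hf1 hf2 using key
    have hfin : {x : K | p.IsRoot x}.Finite := Polynomial.finite_setOf_isRoot hp0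
    have hinj : Function.Injective (fun n : ℕ => (f n, f n - ((n : K) + 1) * γ)) := by
      intro a b hab
      simp only [Prod.mk.injEq] at hab
      obtain ⟨h1, h2⟩ := hab
      rw [h1] at h2
      have h3 : ((a : K) + 1) * γ = ((b : K) + 1) * γ := sub_right_inj.mp h2
      have h4 : ((a : K) + 1) = ((b : K) + 1) := mul_right_cancel₀ hγ h3
      have h5 : (a : K) = (b : K) := add_right_cancel h4
      exact_mod_cast h5
    have hmem : ∀ n : ℕ, (f n, f n - ((n : K) + 1) * γ) ∈
        ({x : K | p.IsRoot x} ×ˢ {x : K | p.IsRoot x}) := fun n => ⟨hf1 n, hf2 n⟩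
    have := Set.infinite_of_injective_forall_mem hinj hmem
    exact this (hfin.prod hfin)
  · rintro ⟨c, rfl⟩ l n hn h
    simp only [eval_C] at h ⊢
    by_contra hc
    have : s ^ n = 1 := mul_right_cancel₀ hc (h.trans (one_mul c).symm)
    exact hsru n hn this
end

section
/- Let K be a field, r ∈ K* not a root of unity, and σ the K-algebra automorphism of the Laurent polynomial ring K[h, h⁻¹] with σ(h) = r·h. Then K[h,h⁻¹] is σ-simple: the only σ-invariant ideals of K[h, h⁻¹] are the zero ideal and the whole ring. -/
/-!
An operator acting diagonally on the monomials `T m` of `K[T;T⁻¹]` with pairwise distinct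
eigenvalues `w m` can only stabilise `⊥` and `⊤`: if `p ≠ 0` lies in a stable ideal and `a` is in
its support, then `σ p - w a • p` also lies in the ideal, has support inside that of `p` minus `a`,
and is nonzero as soon as `p` is not a monomial. Descending on the size of the support we reach a
nonzero monomial, which is a unit. The automorphism `h ↦ r h` acts on `T m` by `r ^ m`, and these
eigenvalues are distinct because `r` is not a root of unity.
-/

open LaurentPolynomial

lemma zpow_injective_of_not_isOfFinOrder {G₀ : Type*} [GroupWithZero G₀] {r : G₀} (hr : r ≠ 0)
    (h : ¬IsOfFinOrder r) : (fun n : ℤ => r ^ n).Injective := by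
  rw [← Units.val_mk0 hr, Units.isOfFinOrder_val, ← injective_zpow_iff_not_isOfFinOrder] at h
  intro m n hmn
  exact h (Units.ext (by simpa using hmn))

namespace LaurentPolynomial

variable {K : Type*} [Field K]

lemma isUnit_of_card_support_eq_one {p : K[T;T⁻¹]} (hp : p.coeff.support.card = 1) :
    IsUnit p := by
  obtain ⟨a, ha⟩ := Finset.card_eq_one.mp hp
  obtain ⟨hpa, hp_eq⟩ := Finsupp.support_eq_singleton.mp ha
  have : p = C (p.coeff a) * T a := by
    rw [← single_eq_C_mul_T]
    exact AddMonoidAlgebra.coeff_injective hp_eq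
  rw [this]
  exact ((isUnit_iff_ne_zero.mpr hpa).map C).mul (isUnit_T a)

lemma map_T_eq_C_zpow_mul_T {σ : K[T;T⁻¹] →ₐ[K] K[T;T⁻¹]} {r : K} (hr : r ≠ 0)
    (hσ : σ (T 1) = C r * T 1) (n : ℤ) : σ (T n) = C (r ^ n) * T n := by
  let f : Multiplicative ℤ →* K[T;T⁻¹] :=
    { toFun n := σ (T n.toAdd)
      map_one' := by simp [T_zero]
      map_mul' m n := by rw [toAdd_mul, T_add, map_mul] }
  let g : Multiplicative ℤ →* K[T;T⁻¹] :=
    { toFun n := C (r ^ n.toAdd) * T n.toAdd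
      map_one' := by simp [T_zero]
      map_mul' m n := by rw [toAdd_mul, zpow_add₀ hr, T_add, map_mul]; ring }
  have hfg : f = g := MonoidHom.ext_mint <| by
    show σ (T 1) = C (r ^ (1 : ℤ)) * T 1
    rw [zpow_one, hσ]
  exact DFunLike.congr_fun hfg (.ofAdd n)

lemma coeff_map_of_map_T {σ : K[T;T⁻¹] →ₐ[K] K[T;T⁻¹]} {w : ℤ → K}
    (hσ : ∀ n, σ (T n) = C (w n) * T n) (p : K[T;T⁻¹]) (m : ℤ) :
    (σ p).coeff m = w m * p.coeff m := by
  induction p using LaurentPolynomial.induction_on' with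
  | add p q hp hq =>
    simp only [map_add, AddMonoidAlgebra.coeff_add, Finsupp.add_apply, hp, hq, mul_add]
  | C_mul_T n a =>
    rw [map_mul, hσ, C_eq_algebraMap, σ.commutes, ← C_eq_algebraMap, ← mul_assoc, ← map_mul,
      ← single_eq_C_mul_T, ← single_eq_C_mul_T]
    simp only [AddMonoidAlgebra.coeff_single, Finsupp.single_apply]
    split_ifs with h
    · rw [h, mul_comm]
    · rw [mul_zero]

section Diagonal

variable {σ : K[T;T⁻¹] → K[T;T⁻¹]} {w : ℤ → K}

lemma coeff_sub_C_mul_of_coeff_map (hσ : ∀ p m, (σ p).coeff m = w m * p.coeff m)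
    (p : K[T;T⁻¹]) (a m : ℤ) : (σ p - C (w a) * p).coeff m = (w m - w a) * p.coeff m := by
  rw [AddMonoidAlgebra.coeff_sub, Finsupp.sub_apply, hσ, ← single_eq_C,
    AddMonoidAlgebra.coeff_single_zero_mul, sub_mul]

lemma card_support_sub_C_mul_lt (hσ : ∀ p m, (σ p).coeff m = w m * p.coeff m)
    {p : K[T;T⁻¹]} {a : ℤ} (ha : a ∈ p.coeff.support) :
    (σ p - C (w a) * p).coeff.support.card < p.coeff.support.card := by
  refine lt_of_le_of_lt (Finset.card_le_card fun m hm => ?_) (Finset.card_erase_lt_of_mem ha)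
  rw [Finsupp.mem_support_iff, coeff_sub_C_mul_of_coeff_map hσ] at hm
  exact Finset.mem_erase.mpr ⟨fun h => hm (by rw [h, sub_self, zero_mul]),
    Finsupp.mem_support_iff.mpr (right_ne_zero_of_mul hm)⟩

lemma sub_C_mul_ne_zero (hσ : ∀ p m, (σ p).coeff m = w m * p.coeff m) (hw : w.Injective)
    {p : K[T;T⁻¹]} {a b : ℤ} (hb : b ∈ p.coeff.support) (hab : b ≠ a) :
    σ p - C (w a) * p ≠ 0 := by
  intro h
  have hb₀ := coeff_sub_C_mul_of_coeff_map hσ p a b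
  rw [h] at hb₀
  exact mul_ne_zero (sub_ne_zero.mpr (hw.ne hab)) (Finsupp.mem_support_iff.mp hb) hb₀.symm

lemma ideal_eq_bot_or_eq_top_of_map_mem (hσ : ∀ p m, (σ p).coeff m = w m * p.coeff m)
    (hw : w.Injective) {I : Ideal K[T;T⁻¹]} (hI : ∀ p ∈ I, σ p ∈ I) : I = ⊥ ∨ I = ⊤ := by
  refine or_iff_not_imp_left.mpr fun hI₀ => ?_
  obtain ⟨p, hpI, hp₀⟩ := Submodule.exists_mem_ne_zero_of_ne_bot hI₀
  induction hn : p.coeff.support.card using Nat.strong_induction_on generalizing p with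
  | _ n ih =>
    rcases Nat.lt_or_ge 1 n with h | h
    · obtain ⟨a, ha, b, hb, hab⟩ := Finset.one_lt_card.mp (hn ▸ h)
      exact ih _ (hn ▸ card_support_sub_C_mul_lt hσ ha) _
        (I.sub_mem (hI p hpI) (I.mul_mem_left _ hpI)) (sub_C_mul_ne_zero hσ hw hb hab.symm) rfl
    · have : 0 < n := hn ▸ Finset.card_pos.mpr
        (Finsupp.support_nonempty_iff.mpr (mt AddMonoidAlgebra.coeff_eq_zero.mp hp₀))
      exact I.eq_top_of_isUnit_mem hpI (isUnit_of_card_support_eq_one (by omega))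

end Diagonal

end LaurentPolynomial

theorem laurent_sigma_simple_general {K : Type*} [Field K]
    (r : K) (hru : ∀ n : ℕ, 1 ≤ n → r ^ n ≠ 1)
    (σ : LaurentPolynomial K ≃ₐ[K] LaurentPolynomial K)
    (hσ : σ (T 1) = C r * T 1)
    (I : Ideal (LaurentPolynomial K))
    (hI : ∀ p : LaurentPolynomial K, p ∈ I ↔ σ p ∈ I) :
    I = ⊥ ∨ I = ⊤ := by
  have hr : r ≠ 0 := by
    rintro rfl
    exact ((isUnit_T 1).map σ).ne_zero (by rw [hσ, map_zero, zero_mul])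
  have hr_inj : (fun n : ℤ => r ^ n).Injective := by
    refine zpow_injective_of_not_isOfFinOrder hr ?_
    rw [isOfFinOrder_iff_pow_eq_one]
    rintro ⟨n, hn, hrn⟩
    exact hru n hn hrn
  exact ideal_eq_bot_or_eq_top_of_map_mem
    (coeff_map_of_map_T (map_T_eq_C_zpow_mul_T (σ := σ.toAlgHom) hr hσ)) hr_inj
    (fun p => (hI p).mp)

/-- If `r` is not a root of unity and `σ` is the `K`-algebra automorphism of the
Laurent polynomial ring with `σ(h) = r·h`, then `K[h,h⁻¹]` is σ-simple: its only
σ-invariant ideals are the zero ideal and the whole ring. -/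
theorem laurent_sigma_simple {K : Type*} [Field K] [CharZero K]
    (r : K) (hr : r ≠ 0) (hru : ∀ n : ℕ, 1 ≤ n → r ^ n ≠ 1)
    (σ : LaurentPolynomial K ≃ₐ[K] LaurentPolynomial K)
    (hσ : σ (T 1) = C r * T 1)
    (I : Ideal (LaurentPolynomial K))
    (hI : ∀ p : LaurentPolynomial K, p ∈ I ↔ σ p ∈ I) :
    I = ⊥ ∨ I = ⊤ :=
  laurent_sigma_simple_general r hru σ hσ I hI
end

section
/- Let K be a field of characteristic 0, r, s ∈ K*, and σ the automorphism of K[h,h⁻¹] with σ(h) = r·h. There exists a nonzero p ∈ K[h,h⁻¹] and an integer n ≥ 1 with σ(p) = s^{-n}·p if and only if there exist integers α, β with α ≠ 0 such that s^α · r^β = 1. -/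
open LaurentPolynomial

/-!
An automorphism with `σ(h) = r·h` acts diagonally on the monomial basis, `σ(h^k) = r^k·h^k`, so
comparing a nonzero coefficient of `p` on both sides of `σ(p) = s^{-n}·p` gives `r^k = s^{-n}`,
i.e. `s^n·r^k = 1`. Conversely, if `s^α·r^β = 1` with (after a sign change) `α > 0`, then `h^β` is
an eigenvector for the eigenvalue `r^β = s^{-α}`.
-/

namespace LaurentPolynomial

variable {K F : Type*} [Field K] [FunLike F K[T;T⁻¹] K[T;T⁻¹]] [AlgHomClass F K K[T;T⁻¹] K[T;T⁻¹]]
  {σ : F} {r : K}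

theorem coeff_C_mul (a : K) (p : K[T;T⁻¹]) (k : ℤ) : (C a * p).coeff k = a * p.coeff k := by
  rw [← smul_eq_C_mul, AddMonoidAlgebra.coeff_smul_apply, smul_eq_mul]

theorem map_T_of_map_T_one (hr : r ≠ 0) (hσ : σ (T 1) = C r * T 1) (k : ℤ) :
    σ (T k) = C (r ^ k) * T k := by
  induction k using Int.induction_on with
  | zero => simp
  | succ k ih =>
    rw [T_add, map_mul, ih, hσ, zpow_add_one₀ hr, map_mul]
    ring
  | pred k ih =>
    have hunit : IsUnit (C r * T 1 : K[T;T⁻¹]) := (hr.isUnit.map C).mul (isUnit_T 1)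
    refine hunit.mul_right_cancel ?_
    rw [← hσ, ← map_mul, ← T_add, sub_add_cancel, ih, hσ, mul_mul_mul_comm, ← map_mul, ← T_add,
      ← zpow_add_one₀ hr, sub_add_cancel]

theorem coeff_map_of_map_T_one (hr : r ≠ 0) (hσ : σ (T 1) = C r * T 1) (p : K[T;T⁻¹]) (k : ℤ) :
    (σ p).coeff k = r ^ k * p.coeff k := by
  induction p using LaurentPolynomial.induction_on' with
  | add p q hp hq =>
    simp only [map_add, AddMonoidAlgebra.coeff_add, Finsupp.add_apply, hp, hq, mul_add]
  | C_mul_T n a =>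
    rw [map_mul, map_T_of_map_T_one hr hσ, C_eq_algebraMap, AlgHomClass.commutes,
      ← C_eq_algebraMap, ← mul_assoc, ← map_mul, coeff_C_mul, coeff_C_mul, T_apply]
    split_ifs with h
    · rw [h]; ring
    · simp

end LaurentPolynomial

theorem exists_pos_zpow_mul_zpow_eq_one {G : Type*} [DivisionCommMonoid G] {s r : G}
    (h : ∃ α β : ℤ, α ≠ 0 ∧ s ^ α * r ^ β = 1) : ∃ α β : ℤ, 0 < α ∧ s ^ α * r ^ β = 1 := by
  obtain ⟨α, β, hα, hαβ⟩ := h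
  rcases hα.lt_or_gt with hneg | hpos
  · refine ⟨-α, -β, neg_pos.mpr hneg, ?_⟩
    rw [zpow_neg, zpow_neg, ← mul_inv, hαβ, inv_one]
  · exact ⟨α, β, hpos, hαβ⟩

theorem principal_eigenvector_iff_general {K : Type*} [Field K]
    (r s : K) (hr : r ≠ 0) (hs : s ≠ 0)
    (σ : LaurentPolynomial K ≃ₐ[K] LaurentPolynomial K)
    (hσ : σ (T 1) = C r * T 1) :
    (∃ p : LaurentPolynomial K, p ≠ 0 ∧ ∃ n : ℕ, 1 ≤ n ∧ σ p = C ((s ^ n)⁻¹) * p) ↔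
      ∃ α β : ℤ, α ≠ 0 ∧ s ^ α * r ^ β = 1 := by
  constructor
  · rintro ⟨p, hp, n, hn, hσp⟩
    obtain ⟨k, hk⟩ : ∃ k, p.coeff k ≠ 0 := by
      by_contra! h
      exact hp (LaurentPolynomial.ext h)
    have hrk : r ^ k = (s ^ n)⁻¹ := by
      have hcoeff := coeff_map_of_map_T_one hr hσ p k
      rw [hσp, coeff_C_mul] at hcoeff
      exact (mul_right_cancel₀ hk hcoeff).symm
    refine ⟨n, k, by exact_mod_cast Nat.one_le_iff_ne_zero.mp hn, ?_⟩
    rw [zpow_natCast, hrk, mul_inv_cancel₀ (pow_ne_zero n hs)]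
  · intro h
    obtain ⟨α, β, hα, hαβ⟩ := exists_pos_zpow_mul_zpow_eq_one h
    lift α to ℕ using hα.le
    refine ⟨T β, (isUnit_T β).ne_zero, α, by exact_mod_cast hα, ?_⟩
    rw [map_T_of_map_T_one hr hσ, eq_inv_of_mul_eq_one_right hαβ, zpow_natCast]

/-- Principal eigenvectors exist (i.e. there are `p ≠ 0` and `n ≥ 1` with
`σ(p) = s^{-n}·p`, where `σ(h) = r·h`) if and only if there exist integers
`α ≠ 0` and `β` with `s^α · r^β = 1`. -/
theorem principal_eigenvector_iff {K : Type*} [Field K] [CharZero K]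
    (r s : K) (hr : r ≠ 0) (hs : s ≠ 0)
    (σ : LaurentPolynomial K ≃ₐ[K] LaurentPolynomial K)
    (hσ : σ (T 1) = C r * T 1) :
    (∃ p : LaurentPolynomial K, p ≠ 0 ∧ ∃ n : ℕ, 1 ≤ n ∧ σ p = C ((s ^ n)⁻¹) * p) ↔
      ∃ α β : ℤ, α ≠ 0 ∧ s ^ α * r ^ β = 1 :=
  principal_eigenvector_iff_general r s hr hs σ hσ
end

section
/- Let K be a field of characteristic 0, r, s ∈ K* roots of unity, and f, g ∈ K[h] nonzero with f(h) = s·g(h) − g(r·h). Then for a positive integer i, the identity sⁱ·g(h) = g(rⁱ·h) holds if and only if Σ_{m=0}^{i-1} s^m f(r^{-m}h) = 0; moreover the set of positive integers i with sⁱ·g(h) = g(rⁱ·h) is nonempty and consists exactly of the multiples of its minimal element. -/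
open Polynomial

/-- With `r, s` roots of unity, `g ≠ 0` and `f(h) = s·g(h) − g(r·h)`:
for `i > 0`, `sⁱ·g(h) = g(rⁱ·h)` iff `P_i = Σ_{m=0}^{i-1} s^m f(r^{-m}h) = 0`;
moreover the set of such positive `i` is nonempty and consists exactly of the
multiples of its minimal element. -/
theorem Pk_zero_iff_and_multiples {K : Type*} [Field K] [CharZero K]
    (r s : K)
    (hrru : ∃ n : ℕ, 0 < n ∧ r ^ n = 1) (hsru : ∃ n : ℕ, 0 < n ∧ s ^ n = 1)
    (g : K[X]) (hg : g ≠ 0) (f : K[X])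
    (hf : f = C s * g - g.comp (C r * X)) :
    (∀ i : ℕ, 0 < i →
      (C (s ^ i) * g = g.comp (C (r ^ i) * X) ↔
        ∑ m ∈ Finset.range i, C (s ^ m) * f.comp (C (r⁻¹ ^ m) * X) = 0)) ∧
    ∃ k : ℕ, 0 < k ∧ ∀ i : ℕ, 0 < i →
      (C (s ^ i) * g = g.comp (C (r ^ i) * X) ↔ k ∣ i) := by
  obtain ⟨nr, hnr, hr1⟩ := hrru
  obtain ⟨ns, hns, hs1⟩ := hsru
  have hr0 : r ≠ 0 := by
    intro h
    rw [h, zero_pow hnr.ne'] at hr1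
    exact zero_ne_one hr1
  -- composition of linear substitutions
  have hcc : ∀ (p : K[X]) (a b : K),
      (p.comp (C a * X)).comp (C b * X) = p.comp (C (a * b) * X) := by
    intro p a b
    rw [comp_assoc]
    congr 1
    simp [mul_comp, C_mul]
    ring
  -- injectivity of substitution by C a * X for a ≠ 0
  have hinj : ∀ a : K, a ≠ 0 →
      Function.Injective (fun p : K[X] => p.comp (C a * X)) := by
    intro a ha p q hpq
    have h2 := congrArg (fun p : K[X] => p.comp (C a⁻¹ * X)) hpq
    simp only [hcc, mul_inv_cancel₀ ha, map_one, one_mul, comp_X] at h2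
    exact h2
  set A : ℕ → Prop := fun i => C (s ^ i) * g = g.comp (C (r ^ i) * X) with hA
  -- telescoping
  set T : ℕ → K[X] := fun m => C (s ^ m) * g.comp (C (r * r⁻¹ ^ m) * X) with hT
  have hterm : ∀ m, C (s ^ m) * f.comp (C (r⁻¹ ^ m) * X) = T (m + 1) - T m := by
    intro m
    have h1 : r * r⁻¹ ^ (m + 1) = r⁻¹ ^ m := by
      rw [pow_succ', ← mul_assoc, mul_inv_cancel₀ hr0, one_mul]
    simp only [hT, hf, sub_comp, mul_comp, C_comp, hcc, h1]
    simp only [pow_succ, C_mul]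
    ring
  have hsum : ∀ i, ∑ m ∈ Finset.range i, C (s ^ m) * f.comp (C (r⁻¹ ^ m) * X)
      = T i - T 0 := by
    intro i
    rw [Finset.sum_congr rfl fun m _ => hterm m, Finset.sum_range_sub]
  have hT0 : T 0 = g.comp (C r * X) := by simp [hT]
  -- A i ↔ T i = T 0
  have hAiff : ∀ i, A i ↔ T i = T 0 := by
    intro i
    have ha : r * r⁻¹ ^ i ≠ 0 := mul_ne_zero hr0 (pow_ne_zero _ (inv_ne_zero hr0))
    have hri : r ^ i * (r * r⁻¹ ^ i) = r := by
      have h2 : r ^ i * r⁻¹ ^ i = 1 := by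
        rw [← mul_pow, mul_inv_cancel₀ hr0, one_pow]
      calc r ^ i * (r * r⁻¹ ^ i) = r * (r ^ i * r⁻¹ ^ i) := by ring
        _ = r := by rw [h2, mul_one]
    have e1 : T i = (C (s ^ i) * g).comp (C (r * r⁻¹ ^ i) * X) := by
      simp [hT, mul_comp]
    have e2 : T 0 = (g.comp (C (r ^ i) * X)).comp (C (r * r⁻¹ ^ i) * X) := by
      rw [hcc, hri, hT0]
    rw [e1, e2]
    exact ((hinj _ ha).eq_iff).symm
  have hpart1 : ∀ i : ℕ, 0 < i →
      (C (s ^ i) * g = g.comp (C (r ^ i) * X) ↔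
        ∑ m ∈ Finset.range i, C (s ^ m) * f.comp (C (r⁻¹ ^ m) * X) = 0) := by
    intro i _
    rw [hsum, sub_eq_zero]
    exact hAiff i
  refine ⟨hpart1, ?_⟩
  -- closure properties of A
  have hA0 : A 0 := by simp [hA]
  have hadd : ∀ i j, A i → A j → A (i + j) := by
    intro i j hi hj
    show C (s ^ (i + j)) * g = g.comp (C (r ^ (i + j)) * X)
    calc C (s ^ (i + j)) * g = C (s ^ i) * (C (s ^ j) * g) := by
          rw [pow_add, C_mul]; ring
      _ = C (s ^ i) * g.comp (C (r ^ j) * X) := by rw [hj]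
      _ = (C (s ^ i) * g).comp (C (r ^ j) * X) := by simp [mul_comp]
      _ = (g.comp (C (r ^ i) * X)).comp (C (r ^ j) * X) := by rw [hi]
      _ = g.comp (C (r ^ (i + j)) * X) := by rw [hcc, ← pow_add]
  have hsub : ∀ i j, j ≤ i → A i → A j → A (i - j) := by
    intro i j hji hi hj
    set d := i - j with hd
    have hij : i = d + j := by omega
    have ha : (r : K) ^ j ≠ 0 := pow_ne_zero _ hr0
    have hi' : C (s ^ i) * g = g.comp (C (r ^ i) * X) := hi
    have hj' : C (s ^ j) * g = g.comp (C (r ^ j) * X) := hj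
    apply hinj _ ha
    show (C (s ^ d) * g).comp (C (r ^ j) * X) = (g.comp (C (r ^ d) * X)).comp (C (r ^ j) * X)
    calc (C (s ^ d) * g).comp (C (r ^ j) * X)
        = C (s ^ d) * g.comp (C (r ^ j) * X) := by simp [mul_comp]
      _ = C (s ^ d) * (C (s ^ j) * g) := by rw [← hj']
      _ = C (s ^ i) * g := by rw [hij, pow_add, C_mul]; ring
      _ = g.comp (C (r ^ i) * X) := hi'
      _ = g.comp (C (r ^ d * r ^ j) * X) := by rw [← pow_add, ← hij]
      _ = (g.comp (C (r ^ d) * X)).comp (C (r ^ j) * X) := (hcc g _ _).symm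
  -- the set is nonempty
  have hex : ∃ i, 0 < i ∧ A i := by
    refine ⟨nr * ns, Nat.mul_pos hnr hns, ?_⟩
    show C (s ^ (nr * ns)) * g = g.comp (C (r ^ (nr * ns)) * X)
    have h1 : r ^ (nr * ns) = 1 := by rw [pow_mul, hr1, one_pow]
    have h2 : s ^ (nr * ns) = 1 := by rw [mul_comm, pow_mul, hs1, one_pow]
    simp [h1, h2]
  classical
  refine ⟨Nat.find hex, (Nat.find_spec hex).1, ?_⟩
  set k := Nat.find hex with hk
  have hk0 : 0 < k := (Nat.find_spec hex).1
  have hAk : A k := (Nat.find_spec hex).2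
  have hmul : ∀ q, A (k * q) := by
    intro q
    induction q with
    | zero => simpa using hA0
    | succ n ih => rw [Nat.mul_succ]; exact hadd _ _ ih hAk
  intro i hi
  constructor
  · intro hAi
    have hle : k * (i / k) ≤ i := Nat.mul_div_le i k
    have hmod : A (i % k) := by
      have := hsub i (k * (i / k)) hle hAi (hmul (i / k))
      have h3 := Nat.mod_add_div i k
      have heq : i - k * (i / k) = i % k := by omega
      rwa [heq] at this
    by_contra hnd
    have hmodpos : 0 < i % k := Nat.pos_of_ne_zero fun h => hnd (Nat.dvd_of_mod_eq_zero h)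
    exact Nat.find_min hex (Nat.mod_lt i hk0) ⟨hmodpos, hmod⟩
  · rintro ⟨q, rfl⟩
    exact hmul q
end
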